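/- Let p, q, N be real numbers with 0 < q < 2 < p and 2 < N < 2(p−q)/(p−2), and set α := (N−q)/(2−q) − p/(p−2). Let (X,d) be a metric space, μ a Borel measure on X, x₀ ∈ X and k > 0, and suppose μ(B_ρ(x₀)) = k ω_N ρ^N for all ρ > 0. Then for every λ > 0: ∫_X (λ + d(x₀,x)^{2−q})^{p/(2−p)} d(x₀,x)^{−q} dμ(x) = k ω_N N λ^{α} ∫₀^∞ (1 + y^{2−q})^{p/(2−p)} y^{N−q−1} dy, and in particular this quantity is finite and equal to λ^{α} times its value at λ = 1. -/

import Mathlib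

open MeasureTheory Set

/-- `ω_N = π^{N/2} / Γ(N/2 + 1)`, the volume of the unit ball in dimension `N`. -/
noncomputable def omegaN (N : ℝ) : ℝ := Real.pi ^ (N / 2) / Real.Gamma (N / 2 + 1)

/-! The hypothesis says that the push-forward of `μ` under `d(x₀, ·)` is the radial measure
`c N r^{N-1} dr` on `(0, ∞)`, with `c = k ω_N`, so the integral is the one-dimensional integral
`c N ∫₀^∞ (λ + r^{2-q})^{p/(2-p)} r^{N-q-1} dr`. It converges because `N - q > 0` and because the
integrand decays like `r^{(2-q)p/(2-p) + N-q-1}`, an exponent below `-1` exactly when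
`N < 2(p-q)/(p-2)`; the substitution `r = λ^{1/(2-q)} y` extracts the factor `λ^α`. -/
open Metric
open scoped ENNReal

theorem MeasureTheory.Measure.ext_of_Iio_of_ne_top {α : Type*} [TopologicalSpace α]
    {m : MeasurableSpace α} [SecondCountableTopology α] [LinearOrder α] [OrderTopology α]
    [BorelSpace α] [NoMaxOrder α] (μ ν : Measure α) (hμ : ∀ a, μ (Iio a) ≠ ∞)
    (h : ∀ a, μ (Iio a) = ν (Iio a)) : μ = ν := by
  refine μ.ext_of_Ico' ν (fun a b _ => ?_) fun a b hab => ?_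
  · exact ne_top_of_le_ne_top (hμ b) (measure_mono Ico_subset_Iio_self)
  · have hνa : ν (Iio a) ≠ ∞ := h a ▸ hμ a
    have hIco : Ico a b = Iio b \ Iio a := by ext; simp
    rw [hIco, measure_sdiff (Iio_subset_Iio hab.le) nullMeasurableSet_Iio (hμ a),
      measure_sdiff (Iio_subset_Iio hab.le) nullMeasurableSet_Iio hνa, h a, h b]

theorem withDensity_rpow_apply_Iio {c N : ℝ} (hc : 0 ≤ c) (hN : 0 < N) {a : ℝ} (ha : 0 < a) :
    (volume.restrict (Ioi 0)).withDensity (fun r => ENNReal.ofReal (c * N * r ^ (N - 1))) (Iio a)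
      = ENNReal.ofReal (c * a ^ N) := by
  have hint : IntegrableOn (fun r : ℝ => c * N * r ^ (N - 1)) (Ioc 0 a) :=
    (intervalIntegral.intervalIntegrable_rpow' (by linarith)).1.const_mul (c * N)
  rw [withDensity_apply _ measurableSet_Iio, Measure.restrict_restrict measurableSet_Iio,
    Iio_inter_Ioi, restrict_Ioo_eq_restrict_Ioc,
    ← ofReal_integral_eq_lintegral_ofReal hint ?_, ← intervalIntegral.integral_of_le ha.le,
    intervalIntegral.integral_const_mul, integral_rpow (Or.inl (by linarith)), sub_add_cancel,
    Real.zero_rpow hN.ne']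
  · field_simp
    ring_nf
  · filter_upwards [ae_restrict_mem measurableSet_Ioc] with r hr
    exact mul_nonneg (mul_nonneg hc hN.le) (Real.rpow_nonneg hr.1.le _)

section VolumeCone

variable {X : Type*} [PseudoMetricSpace X] [MeasurableSpace X] [OpensMeasurableSpace X]
  {μ : Measure X} {x₀ : X} {c N : ℝ}

theorem map_dist_apply_Iio (a : ℝ) :
    μ.map (dist x₀) (Iio a) = μ (ball x₀ a) := by
  have hd : Measurable (dist x₀) := (continuous_const.dist continuous_id).measurable
  rw [Measure.map_apply hd measurableSet_Iio]
  congr 1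
  ext x
  simp [dist_comm]

theorem map_dist_eq_withDensity_of_measure_ball (hc : 0 ≤ c) (hN : 0 < N)
    (hμ : ∀ ρ > (0 : ℝ), μ (ball x₀ ρ) = ENNReal.ofReal (c * ρ ^ N)) :
    μ.map (dist x₀) =
      (volume.restrict (Ioi 0)).withDensity fun r => ENNReal.ofReal (c * N * r ^ (N - 1)) := by
  refine Measure.ext_of_Iio_of_ne_top _ _ (fun a => ?_) fun a => ?_ <;>
    rw [map_dist_apply_Iio] <;> rcases le_or_gt a 0 with ha | ha
  · simp [ball_eq_empty.2 ha]
  · simp [hμ a ha]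
  · rw [ball_eq_empty.2 ha, measure_empty, withDensity_apply _ measurableSet_Iio,
      Measure.restrict_restrict measurableSet_Iio, Iio_inter_Ioi, Ioo_eq_empty ha.not_gt]
    simp
  · rw [hμ a ha, withDensity_rpow_apply_Iio hc hN ha]

theorem lintegral_comp_dist_of_measure_ball (hc : 0 ≤ c) (hN : 0 < N)
    (hμ : ∀ ρ > (0 : ℝ), μ (ball x₀ ρ) = ENNReal.ofReal (c * ρ ^ N))
    {f : ℝ → ℝ≥0∞} (hf : Measurable f) :
    ∫⁻ x, f (dist x₀ x) ∂μ = ∫⁻ r in Ioi 0, ENNReal.ofReal (c * N * r ^ (N - 1)) * f r := by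
  have hd : Measurable (dist x₀) := (continuous_const.dist continuous_id).measurable
  rw [← lintegral_map hf hd,
    map_dist_eq_withDensity_of_measure_ball hc hN hμ,
    lintegral_withDensity_eq_lintegral_mul _ (by fun_prop) hf]
  rfl

theorem lintegral_add_dist_rpow_rpow_mul_dist_rpow_of_measure_ball {a b q lam : ℝ} (hc : 0 ≤ c) (hN : 0 < N)
    (hμ : ∀ ρ > (0 : ℝ), μ (ball x₀ ρ) = ENNReal.ofReal (c * ρ ^ N)) (hlam : 0 ≤ lam)
    (hint : IntegrableOn (fun r : ℝ => (lam + r ^ a) ^ b * r ^ (N - q - 1)) (Ioi 0)) :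
    ∫⁻ x, ENNReal.ofReal ((lam + dist x₀ x ^ a) ^ b) * ENNReal.ofReal (dist x₀ x) ^ (-q) ∂μ =
      ENNReal.ofReal (c * N * ∫ r in Ioi 0, (lam + r ^ a) ^ b * r ^ (N - q - 1)) := by
  refine (lintegral_comp_dist_of_measure_ball hc hN hμ
    (f := fun r => ENNReal.ofReal ((lam + r ^ a) ^ b) * ENNReal.ofReal r ^ (-q))
    (by fun_prop)).trans ?_
  rw [← integral_const_mul, ofReal_integral_eq_lintegral_ofReal (hint.const_mul _)]
  · refine setLIntegral_congr_fun measurableSet_Ioi fun r (hr : 0 < r) => ?_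
    rw [ENNReal.ofReal_rpow_of_pos hr, ← ENNReal.ofReal_mul (by positivity),
      ← ENNReal.ofReal_mul (by positivity), show N - q - 1 = (N - 1) + -q by ring,
      Real.rpow_add hr]
    ring_nf
  · filter_upwards [ae_restrict_mem measurableSet_Ioi] with r (hr : 0 < r)
    positivity

end VolumeCone

section RadialProfile

variable {a b e lam : ℝ}

theorem integrableOn_Ioi_add_rpow_rpow_mul_rpow (hb : b ≤ 0) (he : -1 < e)
    (hdecay : a * b + e < -1) (hlam : 0 < lam) :
    IntegrableOn (fun r : ℝ => (lam + r ^ a) ^ b * r ^ e) (Ioi 0) := by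
  have hmeas : AEStronglyMeasurable (fun r : ℝ => (lam + r ^ a) ^ b * r ^ e) :=
    (by fun_prop : Measurable fun r : ℝ => (lam + r ^ a) ^ b * r ^ e).aestronglyMeasurable
  have hnorm : ∀ r : ℝ, 0 < r → ‖(lam + r ^ a) ^ b * r ^ e‖ = (lam + r ^ a) ^ b * r ^ e :=
    fun r hr => Real.norm_of_nonneg (by positivity)
  have hnear : IntegrableOn (fun r : ℝ => (lam + r ^ a) ^ b * r ^ e) (Ioc 0 1) := by
    refine ((intervalIntegral.intervalIntegrable_rpow' he).1.const_mul (lam ^ b)).mono'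
      hmeas.restrict ?_
    filter_upwards [ae_restrict_mem measurableSet_Ioc] with r hr
    rw [hnorm r hr.1]
    exact mul_le_mul_of_nonneg_right (Real.rpow_le_rpow_of_nonpos hlam
      (le_add_of_nonneg_right (Real.rpow_nonneg hr.1.le a)) hb) (Real.rpow_nonneg hr.1.le e)
  have hfar : IntegrableOn (fun r : ℝ => (lam + r ^ a) ^ b * r ^ e) (Ioi 1) := by
    refine (integrableOn_Ioi_rpow_of_lt hdecay one_pos).mono' hmeas.restrict ?_
    filter_upwards [ae_restrict_mem measurableSet_Ioi] with r (hr : 1 < r)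
    have hr0 : 0 < r := one_pos.trans hr
    rw [hnorm r hr0, Real.rpow_add hr0, Real.rpow_mul hr0.le]
    exact mul_le_mul_of_nonneg_right (Real.rpow_le_rpow_of_nonpos (by positivity)
      (le_add_of_nonneg_left hlam.le) hb) (Real.rpow_nonneg hr0.le e)
  simpa only [Ioc_union_Ioi_eq_Ioi zero_le_one] using hnear.union hfar

theorem integral_Ioi_add_rpow_rpow_mul_rpow (ha : 0 < a) (hlam : 0 < lam) :
    ∫ r in Ioi 0, (lam + r ^ a) ^ b * r ^ e =
      lam ^ ((e + 1) / a + b) * ∫ y in Ioi 0, (1 + y ^ a) ^ b * y ^ e := by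
  set s := lam ^ a⁻¹
  have hs : 0 < s := by positivity
  have hsubst : ∀ y ∈ Ioi (0 : ℝ), (lam + (s * y) ^ a) ^ b * (s * y) ^ e =
      lam ^ b * s ^ e * ((1 + y ^ a) ^ b * y ^ e) := by
    intro y (hy : 0 < y)
    rw [Real.mul_rpow hs.le hy.le, Real.mul_rpow hs.le hy.le, ← Real.rpow_mul hlam.le,
      inv_mul_cancel₀ ha.ne', Real.rpow_one, ← mul_one_add,
      Real.mul_rpow hlam.le (by positivity)]
    ring
  have hpow : s * (lam ^ b * s ^ e) = lam ^ ((e + 1) / a + b) := by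
    rw [mul_left_comm, mul_comm s, ← Real.rpow_add_one hs.ne', ← Real.rpow_mul hlam.le,
      ← Real.rpow_add hlam]
    ring_nf
  have hchange := integral_comp_mul_left_Ioi' (fun r => (lam + r ^ a) ^ b * r ^ e) 0 hs
  rw [mul_zero, setIntegral_congr_fun measurableSet_Ioi hsubst, integral_const_mul,
    smul_eq_mul, ← mul_assoc, hpow] at hchange
  exact hchange.symm

end RadialProfile

theorem omegaN_pos {N : ℝ} (hN : -2 < N) : 0 < omegaN N :=
  div_pos (Real.rpow_pos_of_pos Real.pi_pos _) (Real.Gamma_pos_of_pos (by linarith))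

theorem two_sub_mul_div_add_lt_neg_one {p q N : ℝ} (hp : 2 < p)
    (hN : N < 2 * (p - q) / (p - 2)) : (2 - q) * (p / (2 - p)) + (N - q - 1) < -1 := by
  have hN' := (lt_div_iff₀ (by linarith : (0 : ℝ) < p - 2)).1 hN
  have : N - q < (2 - q) * p / (p - 2) := by rw [lt_div_iff₀ (by linarith)]; linarith
  rw [← neg_sub p, div_neg, mul_neg, ← mul_div_assoc]
  linarith

theorem ckn_integral_on_volume_cone_general (p q N α : ℝ)
    (hq2 : q < 2) (hp : 2 < p)
    (hN1 : 2 < N) (hN2 : N < 2 * (p - q) / (p - 2))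
    (hα : α = (N - q) / (2 - q) - p / (p - 2))
    {X : Type*} [MetricSpace X] [MeasurableSpace X] [BorelSpace X]
    (μ : Measure X) (x₀ : X) (k : ℝ) (hk : 0 < k)
    (hcone : ∀ ρ > (0:ℝ), μ (Metric.ball x₀ ρ) = ENNReal.ofReal (k * omegaN N * ρ ^ N))
    (lam : ℝ) (hlam : 0 < lam) :
    (∫⁻ x, ENNReal.ofReal ((lam + dist x₀ x ^ (2 - q)) ^ (p / (2 - p))) *
          ENNReal.ofReal (dist x₀ x) ^ (-q) ∂μ =
        ENNReal.ofReal (k * omegaN N * N * lam ^ α *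
          ∫ y in Ioi (0:ℝ), (1 + y ^ (2 - q)) ^ (p / (2 - p)) * y ^ (N - q - 1))) ∧
      (∫⁻ x, ENNReal.ofReal ((lam + dist x₀ x ^ (2 - q)) ^ (p / (2 - p))) *
          ENNReal.ofReal (dist x₀ x) ^ (-q) ∂μ ≠ ⊤) ∧
      (∫⁻ x, ENNReal.ofReal ((lam + dist x₀ x ^ (2 - q)) ^ (p / (2 - p))) *
          ENNReal.ofReal (dist x₀ x) ^ (-q) ∂μ =
        ENNReal.ofReal (lam ^ α) *
          ∫⁻ x, ENNReal.ofReal ((1 + dist x₀ x ^ (2 - q)) ^ (p / (2 - p))) *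
            ENNReal.ofReal (dist x₀ x) ^ (-q) ∂μ) := by
  have hc : 0 ≤ k * omegaN N := (mul_pos hk (omegaN_pos (by linarith))).le
  have hb : p / (2 - p) ≤ 0 := div_nonpos_of_nonneg_of_nonpos (by linarith) (by linarith)
  have hp2 : p / (2 - p) = -(p / (p - 2)) := by rw [← neg_sub, div_neg]
  have hscale : ∀ l > (0 : ℝ),
      ∫⁻ x, ENNReal.ofReal ((l + dist x₀ x ^ (2 - q)) ^ (p / (2 - p))) *
          ENNReal.ofReal (dist x₀ x) ^ (-q) ∂μ =
        ENNReal.ofReal (k * omegaN N * N * l ^ α *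
          ∫ y in Ioi (0:ℝ), (1 + y ^ (2 - q)) ^ (p / (2 - p)) * y ^ (N - q - 1)) := by
    intro l hl
    rw [lintegral_add_dist_rpow_rpow_mul_dist_rpow_of_measure_ball hc (by linarith) hcone hl.le
        (integrableOn_Ioi_add_rpow_rpow_mul_rpow hb (by linarith)
          (two_sub_mul_div_add_lt_neg_one hp hN2) hl),
      integral_Ioi_add_rpow_rpow_mul_rpow (by linarith) hl, hα, hp2, mul_assoc _ (l ^ _)]
    ring_nf
  refine ⟨hscale lam hlam, hscale lam hlam ▸ ENNReal.ofReal_ne_top, ?_⟩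
  rw [hscale lam hlam, hscale 1 one_pos, Real.one_rpow, mul_one,
    ← ENNReal.ofReal_mul (by positivity)]
  ring_nf

/-- On an `N`-volume cone at `x₀` with density `k`, the CKN integral
`∫_X (λ + d^{2-q})^{p/(2-p)} d^{-q} dμ` equals
`k ω_N N λ^α ∫₀^∞ (1 + y^{2-q})^{p/(2-p)} y^{N-q-1} dy` where
`α = (N-q)/(2-q) - p/(p-2)`; in particular it is finite and scales as `λ^α`. -/
theorem ckn_integral_on_volume_cone (p q N α : ℝ)
    (hq : 0 < q) (hq2 : q < 2) (hp : 2 < p)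
    (hN1 : 2 < N) (hN2 : N < 2 * (p - q) / (p - 2))
    (hα : α = (N - q) / (2 - q) - p / (p - 2))
    {X : Type*} [MetricSpace X] [MeasurableSpace X] [BorelSpace X]
    (μ : Measure X) (x₀ : X) (k : ℝ) (hk : 0 < k)
    (hcone : ∀ ρ > (0:ℝ), μ (Metric.ball x₀ ρ) = ENNReal.ofReal (k * omegaN N * ρ ^ N))
    (lam : ℝ) (hlam : 0 < lam) :
    (∫⁻ x, ENNReal.ofReal ((lam + dist x₀ x ^ (2 - q)) ^ (p / (2 - p))) *
          ENNReal.ofReal (dist x₀ x) ^ (-q) ∂μ =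
        ENNReal.ofReal (k * omegaN N * N * lam ^ α *
          ∫ y in Ioi (0:ℝ), (1 + y ^ (2 - q)) ^ (p / (2 - p)) * y ^ (N - q - 1))) ∧
      (∫⁻ x, ENNReal.ofReal ((lam + dist x₀ x ^ (2 - q)) ^ (p / (2 - p))) *
          ENNReal.ofReal (dist x₀ x) ^ (-q) ∂μ ≠ ⊤) ∧
      (∫⁻ x, ENNReal.ofReal ((lam + dist x₀ x ^ (2 - q)) ^ (p / (2 - p))) *
          ENNReal.ofReal (dist x₀ x) ^ (-q) ∂μ =
        ENNReal.ofReal (lam ^ α) *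
          ∫⁻ x, ENNReal.ofReal ((1 + dist x₀ x ^ (2 - q)) ^ (p / (2 - p))) *
            ENNReal.ofReal (dist x₀ x) ^ (-q) ∂μ) :=
  ckn_integral_on_volume_cone_general p q N α hq2 hp hN1 hN2 hα μ x₀ k hk hcone lam hlam
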